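/- On a normal metric weak para-f-structure, N^{(2)}_i(X,Y) = η^i([Q̃X, fY]), where Q̃ = Q - id and N^{(2)}_i(X,Y) = (£_{fX} η^i)Y - (£_{fY} η^i)X; moreover, the characteristic distribution ker f is totally geodesic, i.e., ∇_{ξ_i} ξ_j + ∇_{ξ_j} ξ_i = 0 for all i, j. -/

import Mathlib

open scoped BigOperators

noncomputable section

variable (C V : Type*) [CommRing C] [Algebra ℝ C] [AddCommGroup V]
  [Module ℝ V] [Module C V] [IsScalarTower ℝ C V]

/-- A metric weak para-f-structure on a manifold, modelled algebraically:
`C` plays the role of the ring of smooth functions, `V` the `C`-module of vector fields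
with Lie bracket `b` and derivation action `act` of vector fields on functions,
`g` is a compatible pseudo-Riemannian metric (with `f` of rank `2n`, encoded by `hrank`)
and `nabla` its Levi-Civita connection (torsion-free and metric). -/
structure MWPF (p : ℕ) where
  f : V →ₗ[C] V
  Q : V →ₗ[C] V
  ξ : Fin p → V
  η : Fin p → V →ₗ[C] C
  g : V →ₗ[C] V →ₗ[C] C
  b : V → V → V
  act : V → C → C
  nabla : V → V → V
  hQbij : Function.Bijective Q
  hf2 : ∀ X, f (f X) = Q X - ∑ i, η i X • ξ i
  hf3 : ∀ X, f (f (f X)) = f (Q X)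
  hetaxi : ∀ i j, η i (ξ j) = if i = j then (1 : C) else 0
  hQxi : ∀ i, Q (ξ i) = ξ i
  hrange : ∀ X : V, X ∈ LinearMap.range f ↔ ∀ i, η i X = 0
  hgsymm : ∀ X Y, g X Y = g Y X
  hgnondeg : ∀ X, (∀ Y, g X Y = 0) → X = 0
  hrank : ∀ Z, (∀ i, η i Z = 0) → (∀ Y, g Z (f Y) = 0) → Z = 0
  hgcompat : ∀ X Y, g (f X) (f Y) = -(g X (Q Y)) + ∑ i, η i X * η i Y
  hbskew : ∀ X Y, b X Y = - b Y X
  hbaddl : ∀ X Y Z, b (X + Y) Z = b X Z + b Y Z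
  hjacobi : ∀ X Y Z, b X (b Y Z) + b Y (b Z X) + b Z (b X Y) = 0
  hactadd : ∀ X a c, act X (a + c) = act X a + act X c
  hactmul : ∀ X a c, act X (a * c) = act X a * c + a * act X c
  hactX : ∀ (a : C) X Y c, act (a • X + Y) c = a * act X c + act Y c
  hbleib : ∀ X (a : C) Y, b X (a • Y) = act X a • Y + a • b X Y
  hnab1 : ∀ (a : C) X X' Y, nabla (a • X + X') Y = a • nabla X Y + nabla X' Y
  hnabadd : ∀ X Y Z, nabla X (Y + Z) = nabla X Y + nabla X Z
  hnableib : ∀ X (a : C) Y, nabla X (a • Y) = act X a • Y + a • nabla X Y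
  htors : ∀ X Y, nabla X Y - nabla Y X = b X Y
  hmetric : ∀ X Y Z, act X (g Y Z) = g (nabla X Y) Z + g Y (nabla X Z)

namespace MWPF

variable {C V} {p : ℕ} (s : MWPF C V p)

/-- The fundamental 2-form `Φ(X,Y) = g(X, fY)`. -/
def Phi (X Y : V) : C := s.g X (s.f Y)

/-- `dη^i(X,Y) = (1/2)(X(η^i Y) - Y(η^i X) - η^i [X,Y])`. -/
def dEta (i : Fin p) (X Y : V) : C :=
  (2⁻¹ : ℝ) • (s.act X (s.η i Y) - s.act Y (s.η i X) - s.η i (s.b X Y))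

/-- The Nijenhuis torsion `[f,f]`. -/
def Nij (X Y : V) : V :=
  s.f (s.f (s.b X Y)) + s.b (s.f X) (s.f Y) - s.f (s.b (s.f X) Y) - s.f (s.b X (s.f Y))

/-- `N^(1)(X,Y) = [f,f](X,Y) - 2 Σ_i dη^i(X,Y) ξ_i`. -/
def N1 (X Y : V) : V := s.Nij X Y - (2 : ℝ) • ∑ i, s.dEta i X Y • s.ξ i

/-- The difference tensor `Q̃ = Q - id`. -/
def Qt (X : V) : V := s.Q X - X

/-- The Lie derivative of `f`: `(£_Z f)X = [Z, fX] - f[Z,X]`. -/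
def Lief (Z X : V) : V := s.b Z (s.f X) - s.f (s.b Z X)

/-- The Lie derivative of `g`: `(£_Z g)(X,Y) = Z(g(X,Y)) - g([Z,X],Y) - g(X,[Z,Y])`. -/
def Lieg (Z X Y : V) : C := s.act Z (s.g X Y) - s.g (s.b Z X) Y - s.g X (s.b Z Y)

/-- `N^(2)_i(X,Y) = (£_{fX} η^i)Y - (£_{fY} η^i)X`. -/
def N2 (i : Fin p) (X Y : V) : C :=
  (s.act (s.f X) (s.η i Y) - s.η i (s.b (s.f X) Y))
    - (s.act (s.f Y) (s.η i X) - s.η i (s.b (s.f Y) X))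

/-- The exterior differential of the fundamental 2-form. -/
def dPhi (X Y Z : V) : C := (3⁻¹ : ℝ) •
  (s.act X (s.Phi Y Z) + s.act Y (s.Phi Z X) + s.act Z (s.Phi X Y)
    - s.Phi (s.b X Y) Z - s.Phi (s.b Z X) Y - s.Phi (s.b Y Z) X)

/-- The tensor `h_i = (1/2) £_{ξ_i} f`. -/
def hmap (i : Fin p) (X : V) : V := (2⁻¹ : ℝ) • s.Lief (s.ξ i) X

/-- The tensor `N^(5)`. -/
def N5 (X Y Z : V) : C :=
  s.act (s.f Z) (s.g X (s.Qt Y)) - s.act (s.f Y) (s.g X (s.Qt Z))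
    + s.g (s.b X (s.f Z)) (s.Qt Y) - s.g (s.b X (s.f Y)) (s.Qt Z)
    + s.g (s.b Y (s.f Z) - s.b Z (s.f Y) - s.f (s.b Y Z)) (s.Qt X)

/-- The curvature tensor of `nabla`. -/
def Rm (X Y Z : V) : V :=
  s.nabla X (s.nabla Y Z) - s.nabla Y (s.nabla X Z) - s.nabla (s.b X Y) Z

/-!
Projecting the normality condition `[f,f] = 2 Σ dη^i ⊗ ξ_i` onto `ξ_i` gives
`η^i([fX,fY]) = 2 dη^i(X,Y)`; for `X = ξ_j` this says `£_{ξ_j} η^i = 0`.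
The formula for `N^(2)` is the projected identity at `(fX, Y)`, after expanding
`f² = Q - Σ η^j ⊗ ξ_j`. For the second claim, metricity and torsion-freeness turn
`g(∇_{ξ_i} ξ_j, Z)` into `-η^j(∇_Z ξ_i)`, and the symmetrisation of the latter is
`-Z(g(ξ_i, ξ_j)) = 0` since `g(ξ_i, ξ_j)` is constant.
-/

-- Fresh `C V`, so that the `ℝ`-structure is assumed only where `N1` needs it.
variable {C V : Type*} [CommRing C] [AddCommGroup V] [Module C V] {p : ℕ} (s : MWPF C V p)

lemma act_zero (X : V) : s.act X 0 = 0 := by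
  have h := s.hactadd X 0 0
  rw [add_zero] at h
  exact left_eq_add.mp h

lemma act_one (X : V) : s.act X 1 = 0 := by
  have h := s.hactmul X 1 1
  simp only [mul_one, one_mul] at h
  linear_combination -h

lemma act_eta_xi (X : V) (i j : Fin p) : s.act X (s.η i (s.ξ j)) = 0 := by
  rw [s.hetaxi]
  split_ifs
  exacts [s.act_one X, s.act_zero X]

lemma b_add_right (X Y Z : V) : s.b X (Y + Z) = s.b X Y + s.b X Z := by
  rw [s.hbskew X (Y + Z), s.hbaddl, s.hbskew Y X, s.hbskew Z X]
  abel

lemma b_zero_left (Z : V) : s.b 0 Z = 0 := by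
  have h := s.hbaddl 0 0 Z
  rw [add_zero] at h
  exact left_eq_add.mp h

lemma b_sub_left (X Y Z : V) : s.b (X - Y) Z = s.b X Z - s.b Y Z := by
  rw [eq_sub_iff_add_eq, ← s.hbaddl, sub_add_cancel]

lemma b_sum_right {ι : Type*} (X : V) (t : Finset ι) (v : ι → V) :
    s.b X (∑ j ∈ t, v j) = ∑ j ∈ t, s.b X (v j) :=
  map_sum (AddMonoidHom.mk' (s.b X) (s.b_add_right X)) v t

lemma eta_f (i : Fin p) (X : V) : s.η i (s.f X) = 0 :=
  (s.hrange (s.f X)).mp ⟨X, rfl⟩ i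

lemma f_xi (j : Fin p) : s.f (s.ξ j) = 0 := by
  have hff : s.f (s.f (s.ξ j)) = 0 := by
    rw [s.hf2, s.hQxi, sub_eq_zero]
    simp [s.hetaxi, ite_smul]
  have h := s.hf3 (s.ξ j)
  rwa [s.hQxi, hff, map_zero, eq_comm] at h

lemma g_xi (j : Fin p) (X : V) : s.g X (s.ξ j) = s.η j X := by
  have h := s.hgcompat X (s.ξ j)
  simp only [s.f_xi, map_zero, s.hQxi, s.hetaxi, mul_ite, mul_one, mul_zero,
    Finset.sum_ite_eq', Finset.mem_univ, if_true] at h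
  linear_combination h

lemma g_xi_left (j : Fin p) (X : V) : s.g (s.ξ j) X = s.η j X := by
  rw [s.hgsymm, s.g_xi]

lemma eta_nabla_xi_add_eta_nabla_xi (i j : Fin p) (Z : V) :
    s.η j (s.nabla Z (s.ξ i)) + s.η i (s.nabla Z (s.ξ j)) = 0 := by
  have h := s.hmetric Z (s.ξ i) (s.ξ j)
  rw [s.g_xi_left, s.g_xi, s.g_xi_left, s.act_eta_xi] at h
  linear_combination -h

section Normal

variable [Algebra ℝ C] [Module ℝ V] [IsScalarTower ℝ C V]

lemma eta_bracket_f_f (hN : ∀ X Y, s.N1 X Y = 0) (i : Fin p) (X Y : V) :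
    s.η i (s.b (s.f X) (s.f Y))
      = s.act X (s.η i Y) - s.act Y (s.η i X) - s.η i (s.b X Y) := by
  have h := congrArg (s.η i) (hN X Y)
  simp only [N1, Nij, map_zero, map_sub, map_add, map_sum, LinearMap.map_smul_of_tower,
    map_smul, s.eta_f, s.hetaxi, smul_eq_mul, mul_ite, mul_one, mul_zero,
    Finset.sum_ite_eq, Finset.mem_univ, if_true, zero_add, sub_zero] at h
  have two_dEta : (2 : ℝ) • s.dEta i X Y
      = s.act X (s.η i Y) - s.act Y (s.η i X) - s.η i (s.b X Y) := by
    rw [dEta, smul_smul, mul_inv_cancel₀ two_ne_zero, one_smul]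
  rw [two_dEta] at h
  linear_combination h

lemma eta_bracket_xi (hN : ∀ X Y, s.N1 X Y = 0) (i j : Fin p) (Y : V) :
    s.η i (s.b (s.ξ j) Y) = s.act (s.ξ j) (s.η i Y) := by
  have h := s.eta_bracket_f_f hN i (s.ξ j) Y
  rw [s.f_xi, s.b_zero_left, map_zero, s.act_eta_xi] at h
  linear_combination h

lemma eta_bracket_f_xi (hN : ∀ X Y, s.N1 X Y = 0) (i j : Fin p) (Y : V) :
    s.η i (s.b (s.f Y) (s.ξ j)) = 0 := by
  rw [s.hbskew, map_neg, s.eta_bracket_xi hN, s.eta_f, s.act_zero, neg_zero]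

lemma eta_bracket_f_sum (hN : ∀ X Y, s.N1 X Y = 0) (i : Fin p) (X Y : V) :
    s.η i (s.b (s.f Y) (∑ j, s.η j X • s.ξ j)) = s.act (s.f Y) (s.η i X) := by
  simp only [s.b_sum_right, map_sum, s.hbleib, map_add, map_smul, s.hetaxi,
    s.eta_bracket_f_xi hN, smul_eq_mul, mul_ite, mul_one, mul_zero, add_zero]
  simp [Finset.sum_ite_eq]

theorem N2_eq_eta_bracket_Qt (hN : ∀ X Y, s.N1 X Y = 0) (i : Fin p) (X Y : V) :
    s.N2 i X Y = s.η i (s.b (s.Qt X) (s.f Y)) := by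
  have hfX := s.eta_bracket_f_f hN i (s.f X) Y
  rw [s.eta_f i X, s.act_zero] at hfX
  have hffX : s.η i (s.b (s.f (s.f X)) (s.f Y))
      = s.η i (s.b (s.Q X) (s.f Y)) + s.act (s.f Y) (s.η i X) := by
    rw [s.hf2, s.b_sub_left, map_sub, s.hbskew (∑ j, s.η j X • s.ξ j), map_neg,
      s.eta_bracket_f_sum hN]
    ring
  have hswap : s.η i (s.b X (s.f Y)) = - s.η i (s.b (s.f Y) X) := by
    rw [s.hbskew X, map_neg]
  rw [N2, Qt, s.b_sub_left, map_sub]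
  linear_combination -hfX + hffX + hswap

lemma g_nabla_xi_xi (hN : ∀ X Y, s.N1 X Y = 0) (i j : Fin p) (Z : V) :
    s.g (s.nabla (s.ξ i) (s.ξ j)) Z = - s.η j (s.nabla Z (s.ξ i)) := by
  have h := s.hmetric (s.ξ i) (s.ξ j) Z
  have htors : s.nabla (s.ξ i) Z = s.nabla Z (s.ξ i) + s.b (s.ξ i) Z := by
    rw [← s.htors]
    abel
  rw [s.g_xi_left, s.g_xi_left, htors, map_add,
    s.eta_bracket_xi hN] at h
  linear_combination -h

theorem nabla_xi_add_nabla_xi (hN : ∀ X Y, s.N1 X Y = 0) (i j : Fin p) :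
    s.nabla (s.ξ i) (s.ξ j) + s.nabla (s.ξ j) (s.ξ i) = 0 := by
  refine s.hgnondeg _ fun Z => ?_
  rw [map_add, LinearMap.add_apply, s.g_nabla_xi_xi hN, s.g_nabla_xi_xi hN]
  linear_combination -s.eta_nabla_xi_add_eta_nabla_xi i j Z

end Normal

end MWPF

/-- on a normal metric weak para-f-structure,
`N^(2)_i(X,Y) = η^i([Q̃X, fY])`, and `ker f` is totally geodesic:
`∇_{ξ_i} ξ_j + ∇_{ξ_j} ξ_i = 0`. -/
theorem normal_N2_and_totally_geodesic {C V : Type*} [CommRing C] [Algebra ℝ C]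
    [AddCommGroup V] [Module ℝ V] [Module C V] [IsScalarTower ℝ C V] {p : ℕ}
    (s : MWPF C V p) (hN : ∀ X Y, s.N1 X Y = 0) :
    (∀ (i : Fin p) (X Y : V), s.N2 i X Y = s.η i (s.b (s.Qt X) (s.f Y))) ∧
    (∀ i j : Fin p, s.nabla (s.ξ i) (s.ξ j) + s.nabla (s.ξ j) (s.ξ i) = 0) :=
  ⟨s.N2_eq_eta_bracket_Qt hN, s.nabla_xi_add_nabla_xi hN⟩
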